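/- arXiv:2106.15437 — 3 statements merged into one kernel-verified Lean document; each statement's English description precedes it below -/
import Mathlib

section
/- Let Ψ = (ψ_1, …, ψ_t) be nonzero linear forms ℤ^D → ℤ, s ≥ 1, and κ_0 > 0. Let f_1, …, f_t : {1,…,N} → ℂ be bounded in magnitude by 1 (zero outside {1,…,N}), let K ⊆ ({-N,…,N})^D satisfy |K| ≥ κ_0 N^D, and let c ∈ ℤ be such that ψ_i(x) + c ∈ {1,…,N} for all x ∈ K and all i. Then there is a constant C depending only on Ψ, s, D, t, κ_0 such that |𝔼_{x ∈ K} ∏_{i=1}^t f_i(ψ_i(x) + c)| ≤ C · N^{1/4} · min_i ‖f_i‖_{U^{s+1}[N]}. -/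
/-!
Splitting off one direction of the cube writes the Gowers sum of a function supported on `A` as a
sum of squares `∑ₖ |∑_y Δₖ f(y)|²`, which is at least its `k = 0` term `(∑_y |f y|^{2^s})²`.
There are at most `N (2N)^{s+1}` cubes in `[N]`, so together with the power-mean inequality this
gives `‖f‖_{ℓ¹[N]} ≤ 2 N^{1 + 1/4} ‖f‖_{U^{s+1}[N]}`; the exponent `s / 2^{s+1}` that really
appears is at most `1/4`. On the other side, bounding every factor except `f_j` by `1`, the
average is at most `(2N+1)^{D-1} ‖f_j‖_{ℓ¹[N]} / |K|`, because a level set of the nonzero form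
`ψ_j` meets the box `[-N, N]^D` in at most `(2N+1)^{D-1}` points.
-/

open Finset Pointwise
open scoped ComplexConjugate

/-- The Gowers `U^d(A)` norm of `f : ℤ → ℂ` relative to a finite set `A ⊆ ℤ`. -/
noncomputable def gowersNorm (A : Finset ℤ) (d : ℕ) (f : ℤ → ℂ) : ℝ :=
  (((∑ p ∈ (A ×ˢ Fintype.piFinset fun _ : Fin d => A - A).filter
        (fun p => ∀ ω : Finset (Fin d), p.1 + ∑ i ∈ ω, p.2 i ∈ A),
      ∏ ω : Finset (Fin d),
        if ω.card % 2 = 0 then f (p.1 + ∑ i ∈ ω, p.2 i)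
        else (starRingEnd ℂ) (f (p.1 + ∑ i ∈ ω, p.2 i))) /
      (((A ×ˢ Fintype.piFinset fun _ : Fin d => A - A).filter
        (fun p => ∀ ω : Finset (Fin d), p.1 + ∑ i ∈ ω, p.2 i ∈ A)).card : ℂ)).re) ^
    ((1 : ℝ) / 2 ^ d)

theorem Fin.tail_zero {α : Type*} [Zero α] {n : ℕ} : Fin.tail (0 : Fin (n + 1) → α) = 0 :=
  rfl

theorem Fin.prod_finset_univ_succ {M : Type*} [CommMonoid M] {n : ℕ}
    (g : Finset (Fin (n + 1)) → M) :
    ∏ ω, g ω = (∏ ω : Finset (Fin n), g (ω.image Fin.succ)) *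
      ∏ ω : Finset (Fin n), g (insert 0 (ω.image Fin.succ)) := by
  have h0 : (0 : Fin (n + 1)) ∉ (univ : Finset (Fin n)).image Fin.succ := by simp
  have huniv : (univ : Finset (Fin (n + 1))) = insert 0 (univ.image Fin.succ) := by
    ext i; cases i using Fin.cases <;> simp
  rw [← powerset_univ, huniv,
    prod_powerset_insert h0, powerset_image, prod_image, prod_image, powerset_univ]
  all_goals exact fun _ _ _ _ h => Finset.image_injective (Fin.succ_injective n) h

theorem Fin.sum_piFinset_const_succ {α M : Type*} [AddCommMonoid M] {n : ℕ} (S : Finset α)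
    (F : α → (Fin n → α) → M) :
    ∑ h ∈ Fintype.piFinset (fun _ : Fin (n + 1) => S), F (h 0) (Fin.tail h) =
      ∑ a ∈ S, ∑ k ∈ Fintype.piFinset (fun _ : Fin n => S), F a k := by
  have hmap : (Fintype.piFinset fun _ : Fin (n + 1) => S).map (Fin.consEquiv _).symm.toEmbedding =
      S ×ˢ Fintype.piFinset (fun _ : Fin n => S) := by
    convert map_consEquiv_filter_piFinset (fun _ : Fin (n + 1) => S) (fun _ => True) using 1
    · simp
    · rw [filter_true]; rfl
  rw [← sum_product', ← hmap, sum_map]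
  rfl

section GowersProduct

variable {G : Type*} [AddCommGroup G] {d : ℕ}

noncomputable def gowersProduct (f : G → ℂ) (x : G) (h : Fin d → G) : ℂ :=
  ∏ ω : Finset (Fin d),
    if ω.card % 2 = 0 then f (x + ∑ i ∈ ω, h i) else conj (f (x + ∑ i ∈ ω, h i))

theorem gowersProduct_of_dim_zero (f : G → ℂ) (x : G) (h : Fin 0 → G) :
    gowersProduct f x h = f x := by
  rw [gowersProduct, Fintype.prod_subsingleton _ ∅]
  simp

theorem gowersProduct_succ (f : G → ℂ) (x : G) (h : Fin (d + 1) → G) :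
    gowersProduct f x h =
      gowersProduct f x (Fin.tail h) * conj (gowersProduct f (x + h 0) (Fin.tail h)) := by
  rw [gowersProduct, Fin.prod_finset_univ_succ, gowersProduct, gowersProduct, map_prod]
  congr 1
  · simp [Finset.card_image_of_injective _ (Fin.succ_injective d), Fin.tail]
  · refine prod_congr rfl fun ω _ => ?_
    have h0 : (0 : Fin (d + 1)) ∉ ω.image Fin.succ := by simp [Fin.succ_ne_zero]
    rw [card_insert_of_notMem h0, sum_insert h0, card_image_of_injective _ (Fin.succ_injective d),
      sum_image fun _ _ _ _ h => Fin.succ_injective d h, ← add_assoc]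
    simp only [Fin.tail]
    split_ifs <;> first | omega | simp

theorem gowersProduct_eq_zero {f : G → ℂ} {x : G} {h : Fin d → G} (ω : Finset (Fin d))
    (hω : f (x + ∑ i ∈ ω, h i) = 0) : gowersProduct f x h = 0 :=
  prod_eq_zero (mem_univ ω) (by simp [hω])

theorem norm_gowersProduct_zero (f : G → ℂ) (x : G) :
    ∀ d, ‖gowersProduct f x (0 : Fin d → G)‖ = ‖f x‖ ^ 2 ^ d
  | 0 => by simp [gowersProduct_of_dim_zero]
  | d + 1 => by
    rw [gowersProduct_succ, Fin.tail_zero, Pi.zero_apply, add_zero, norm_mul, Complex.norm_conj,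
      norm_gowersProduct_zero f x d, pow_succ, pow_mul, sq]

theorem gowersProduct_zero (f : G → ℂ) (x : G) (d : ℕ) :
    gowersProduct f x (0 : Fin (d + 1) → G) = ((‖f x‖ ^ 2 ^ (d + 1) : ℝ) : ℂ) := by
  rw [gowersProduct_succ, Fin.tail_zero, Pi.zero_apply, add_zero, Complex.mul_conj,
    Complex.normSq_eq_norm_sq, norm_gowersProduct_zero, pow_succ 2 d, pow_mul]

theorem sum_sub_comp_add_eq_sum [DecidableEq G] {M : Type*} [AddCommMonoid M] {A : Finset G}
    {g : G → M} (hg : ∀ y ∉ A, g y = 0) {x : G} (hx : x ∈ A) :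
    ∑ a ∈ A - A, g (x + a) = ∑ y ∈ A, g y := by
  rw [← sum_image (add_right_injective x).injOn]
  refine (sum_subset (fun y hy => mem_image.2 ⟨y - x, sub_mem_sub hy hx, by abel⟩)
    fun y _ hy => hg y hy).symm

theorem sum_sum_gowersProduct_succ [DecidableEq G] {A : Finset G} {f : G → ℂ}
    (hf : ∀ y ∉ A, f y = 0) :
    ∑ x ∈ A, ∑ h ∈ Fintype.piFinset (fun _ : Fin (d + 1) => A - A), gowersProduct f x h =
      ∑ k ∈ Fintype.piFinset (fun _ : Fin d => A - A),
        (Complex.normSq (∑ y ∈ A, gowersProduct f y k) : ℂ) := by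
  have hsupp (k : Fin d → G) (y : G) (hy : y ∉ A) : gowersProduct f y k = 0 :=
    gowersProduct_eq_zero ∅ (by simpa using hf y hy)
  calc _ = ∑ x ∈ A, ∑ k ∈ Fintype.piFinset (fun _ : Fin d => A - A),
        gowersProduct f x k * conj (∑ y ∈ A, gowersProduct f y k) := by
        refine sum_congr rfl fun x hx => ?_
        simp_rw [gowersProduct_succ f x]
        rw [Fin.sum_piFinset_const_succ (A - A)
          (fun a k => gowersProduct f x k * conj (gowersProduct f (x + a) k)), sum_comm]
        refine sum_congr rfl fun k _ => ?_
        rw [← mul_sum, ← map_sum, sum_sub_comp_add_eq_sum (hsupp k) hx]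
    _ = _ := by
        rw [sum_comm]
        refine sum_congr rfl fun k _ => ?_
        rw [← sum_mul, Complex.mul_conj]

end GowersProduct

theorem rpow_one_div_two_pow_pow {x : ℝ} (hx : 0 ≤ x) (d : ℕ) :
    (x ^ ((1 : ℝ) / 2 ^ d)) ^ 2 ^ d = x := by
  simpa [one_div] using Real.rpow_inv_natCast_pow hx (pow_ne_zero d two_ne_zero)

section GowersNorm

variable {A : Finset ℤ} {d : ℕ} {f : ℤ → ℂ}

def gowersCubes (A : Finset ℤ) (d : ℕ) : Finset (ℤ × (Fin d → ℤ)) :=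
  (A ×ˢ Fintype.piFinset fun _ : Fin d => A - A).filter
    (fun p => ∀ ω : Finset (Fin d), p.1 + ∑ i ∈ ω, p.2 i ∈ A)

theorem gowersNorm_eq_rpow :
    gowersNorm A d f = ((∑ p ∈ gowersCubes A d, gowersProduct f p.1 p.2) /
      ((gowersCubes A d).card : ℂ)).re ^ ((1 : ℝ) / 2 ^ d) :=
  rfl

theorem gowersCubes_nonempty (hA : A.Nonempty) : (gowersCubes A d).Nonempty := by
  obtain ⟨a, ha⟩ := hA
  refine ⟨(a, 0), mem_filter.2 ⟨mem_product.2 ⟨ha, ?_⟩, fun ω => by simpa using ha⟩⟩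
  exact Fintype.mem_piFinset.2 fun _ => by simpa using sub_mem_sub ha ha

theorem card_gowersCubes_le : (gowersCubes A d).card ≤ A.card * (A - A).card ^ d := by
  refine (card_filter_le _ _).trans ?_
  rw [card_product, Fintype.card_piFinset_const]

theorem sum_gowersCubes_gowersProduct (hf : ∀ y ∉ A, f y = 0) :
    ∑ p ∈ gowersCubes A d, gowersProduct f p.1 p.2 =
      ∑ x ∈ A, ∑ h ∈ Fintype.piFinset (fun _ : Fin d => A - A), gowersProduct f x h := by
  rw [gowersCubes, sum_filter_of_ne, sum_product]
  intro p _ hp ω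
  by_contra hω
  exact hp (gowersProduct_eq_zero ω (hf _ hω))

theorem gowersNorm_succ_eq_sum_normSq (hf : ∀ y ∉ A, f y = 0) :
    gowersNorm A (d + 1) f =
      ((∑ k ∈ Fintype.piFinset (fun _ : Fin d => A - A),
        Complex.normSq (∑ y ∈ A, gowersProduct f y k)) / (gowersCubes A (d + 1)).card) ^
        ((1 : ℝ) / 2 ^ (d + 1)) := by
  rw [gowersNorm_eq_rpow, sum_gowersCubes_gowersProduct hf, sum_sum_gowersProduct_succ hf,
    ← Complex.ofReal_sum, ← Complex.ofReal_natCast, ← Complex.ofReal_div, Complex.ofReal_re]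

theorem gowersNorm_succ_nonneg (hf : ∀ y ∉ A, f y = 0) : 0 ≤ gowersNorm A (d + 1) f := by
  rw [gowersNorm_succ_eq_sum_normSq hf]
  exact Real.rpow_nonneg (div_nonneg (sum_nonneg fun _ _ => Complex.normSq_nonneg _)
    (Nat.cast_nonneg _)) _

theorem sq_sum_norm_pow_le_gowersNorm (hA : A.Nonempty) (hf : ∀ y ∉ A, f y = 0) (s : ℕ) :
    (∑ y ∈ A, ‖f y‖ ^ 2 ^ (s + 1)) ^ 2 ≤
      gowersNorm A (s + 2) f ^ 2 ^ (s + 2) * (A.card * (A - A).card ^ (s + 2)) := by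
  set R := ∑ k ∈ Fintype.piFinset (fun _ : Fin (s + 1) => A - A),
    Complex.normSq (∑ y ∈ A, gowersProduct f y k)
  have hR : (∑ y ∈ A, ‖f y‖ ^ 2 ^ (s + 1)) ^ 2 ≤ R := by
    have h0 : (0 : Fin (s + 1) → ℤ) ∈ Fintype.piFinset (fun _ => A - A) := by
      obtain ⟨a, ha⟩ := hA
      exact Fintype.mem_piFinset.2 fun _ => by simpa using sub_mem_sub ha ha
    refine le_of_eq_of_le ?_ (single_le_sum (fun k _ => Complex.normSq_nonneg _) h0)
    simp_rw [gowersProduct_zero, ← Complex.ofReal_sum, Complex.normSq_ofReal, sq]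
  have hM : (0 : ℝ) < (gowersCubes A (s + 2)).card := by
    exact_mod_cast (gowersCubes_nonempty hA).card_pos
  have hRM : 0 ≤ R / (gowersCubes A (s + 2)).card := div_nonneg ((sq_nonneg _).trans hR) hM.le
  rw [gowersNorm_succ_eq_sum_normSq hf, rpow_one_div_two_pow_pow hRM]
  calc _ ≤ R := hR
    _ = R / (gowersCubes A (s + 2)).card * (gowersCubes A (s + 2)).card :=
      (div_mul_cancel₀ R hM.ne').symm
    _ ≤ _ := by
      gcongr
      exact_mod_cast card_gowersCubes_le

end GowersNorm

theorem card_Icc_sub_Icc_le (N : ℕ) : (Icc (1 : ℤ) N - Icc 1 (N : ℤ)).card ≤ 2 * N := by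
  have hsub : Icc (1 : ℤ) N - Icc 1 (N : ℤ) ⊆ Icc (1 - N) (N - 1) := by
    intro y hy
    obtain ⟨a, ha, b, hb, rfl⟩ := mem_sub.1 hy
    rw [mem_Icc] at ha hb ⊢
    omega
  have := card_le_card hsub
  rw [Int.card_Icc] at this
  omega

section Interval

variable {N : ℕ} {f : ℤ → ℂ}

theorem sum_norm_pow_le_gowersNorm_Icc (hN : 1 ≤ N) (hf : ∀ y ∉ Icc (1 : ℤ) N, f y = 0)
    (s : ℕ) :
    (∑ y ∈ Icc (1 : ℤ) N, ‖f y‖) ^ 2 ^ (s + 2) ≤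
      2 ^ (s + 2) * (N : ℝ) ^ (2 ^ (s + 2) + s + 1) *
        gowersNorm (Icc 1 N) (s + 2) f ^ 2 ^ (s + 2) := by
  have hcard : (Icc (1 : ℤ) N).card = N := by simp
  have hm : 2 ^ (s + 1) - 1 + 1 = 2 ^ (s + 1) := Nat.sub_add_cancel Nat.one_le_two_pow
  have hG0 := gowersNorm_succ_nonneg (d := s + 1) hf
  have hG := sq_sum_norm_pow_le_gowersNorm (nonempty_Icc.2 (by omega)) hf s
  have hjensen := pow_sum_le_card_mul_sum_pow (s := Icc (1 : ℤ) N) (f := fun y => ‖f y‖)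
    (fun _ _ => norm_nonneg _) (2 ^ (s + 1) - 1)
  rw [hm, hcard] at hjensen
  have hdiff : ((Icc (1 : ℤ) N - Icc 1 (N : ℤ)).card : ℝ) ≤ 2 * N := by
    exact_mod_cast card_Icc_sub_Icc_le N
  calc (∑ y ∈ Icc (1 : ℤ) N, ‖f y‖) ^ 2 ^ (s + 2)
      = ((∑ y ∈ Icc (1 : ℤ) N, ‖f y‖) ^ 2 ^ (s + 1)) ^ 2 := by rw [← pow_mul, ← pow_succ]
    _ ≤ ((N : ℝ) ^ (2 ^ (s + 1) - 1) * ∑ y ∈ Icc (1 : ℤ) N, ‖f y‖ ^ 2 ^ (s + 1)) ^ 2 := by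
      gcongr
    _ ≤ (N : ℝ) ^ (2 * (2 ^ (s + 1) - 1)) *
        (gowersNorm (Icc 1 N) (s + 2) f ^ 2 ^ (s + 2) * (N * (2 * N) ^ (s + 2))) := by
      rw [mul_pow, ← pow_mul, mul_comm (2 ^ (s + 1) - 1)]
      rw [hcard] at hG
      gcongr
      exact hG.trans (by gcongr)
    _ = _ := by
      rw [mul_pow, show 2 ^ (s + 2) + s + 1 = 2 * (2 ^ (s + 1) - 1) + 1 + (s + 2) by
        rw [pow_succ]; omega, pow_add, pow_add, pow_one]
      ring

theorem sum_norm_le_gowersNorm_Icc (hN : 1 ≤ N) (hf : ∀ y ∉ Icc (1 : ℤ) N, f y = 0) (s : ℕ) :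
    ∑ y ∈ Icc (1 : ℤ) N, ‖f y‖ ≤
      2 * (N : ℝ) ^ ((1 : ℝ) / 4) * gowersNorm (Icc 1 N) (s + 2) f * N := by
  have hN' : (1 : ℝ) ≤ N := by exact_mod_cast hN
  have hG0 := gowersNorm_succ_nonneg (d := s + 1) hf
  have hquarter : ((N : ℝ) ^ ((1 : ℝ) / 4)) ^ 2 ^ (s + 2) = (N : ℝ) ^ 2 ^ s := by
    rw [← Real.rpow_natCast, ← Real.rpow_mul (by positivity), ← Real.rpow_natCast]
    congr 1
    push_cast
    ring
  refine le_of_pow_le_pow_left₀ (pow_ne_zero (s + 2) two_ne_zero) (by positivity) ?_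
  calc _ ≤ 2 ^ (s + 2) * (N : ℝ) ^ (2 ^ (s + 2) + s + 1) *
        gowersNorm (Icc 1 N) (s + 2) f ^ 2 ^ (s + 2) := sum_norm_pow_le_gowersNorm_Icc hN hf s
    _ ≤ 2 ^ 2 ^ (s + 2) * (N : ℝ) ^ (2 ^ s + 2 ^ (s + 2)) *
        gowersNorm (Icc 1 N) (s + 2) f ^ 2 ^ (s + 2) := by
      have := Nat.lt_two_pow_self (n := s)
      gcongr 2 ^ ?_ * (N : ℝ) ^ ?_ * _
      · exact one_le_two
      · exact Nat.lt_two_pow_self.le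
      · omega
    _ = _ := by rw [mul_pow, mul_pow, mul_pow, hquarter, pow_add]; ring

end Interval

theorem norm_prod_le_norm_of_norm_le_one {ι α : Type*} [Fintype ι] [SeminormedCommRing α]
    [NormMulClass α] [NormOneClass α] {g : ι → α} (hg : ∀ i, ‖g i‖ ≤ 1) (j : ι) :
    ‖∏ i, g i‖ ≤ ‖g j‖ := by
  classical
  rw [norm_prod, ← mul_prod_erase _ _ (mem_univ j)]
  exact mul_le_of_le_one_right (norm_nonneg _)
    (prod_le_one (fun _ _ => norm_nonneg _) fun i _ => hg i)

section LinearForm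

variable {R : Type*} [CommRing R] [IsDomain R] [DecidableEq R] {D : ℕ} {ψ : Fin D → R}
  {B : Finset R} {K : Finset (Fin D → R)}

theorem card_filter_linear_form_add_eq_le (hψ : ψ ≠ 0) (hK : ∀ x ∈ K, ∀ j, x j ∈ B)
    (c y : R) : (K.filter fun x => ∑ j, ψ j * x j + c = y).card ≤ B.card ^ (D - 1) := by
  obtain ⟨j₀, hj₀⟩ := Function.ne_iff.1 hψ
  have hproj : Set.MapsTo (fun (x : Fin D → R) (i : {i // i ≠ j₀}) => x i)
      (K.filter fun x => ∑ j, ψ j * x j + c = y) (Fintype.piFinset fun _ : {i // i ≠ j₀} => B) :=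
    fun x hx => Fintype.mem_piFinset.2 fun i => hK x (mem_filter.1 hx).1 i
  have hinj : Set.InjOn (fun (x : Fin D → R) (i : {i // i ≠ j₀}) => x i)
      (K.filter fun x => ∑ j, ψ j * x j + c = y) := by
    intro x hx x' hx' heq
    have hsum := (mem_filter.1 hx).2.trans (mem_filter.1 hx').2.symm
    rw [Fintype.sum_eq_add_sum_subtype_ne _ j₀, Fintype.sum_eq_add_sum_subtype_ne _ j₀] at hsum
    simp only [fun i : {i // i ≠ j₀} => congrFun heq i, add_left_inj] at hsum
    funext i
    by_cases hi : i = j₀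
    · subst hi; exact mul_left_cancel₀ hj₀ hsum
    · exact congrFun heq ⟨i, hi⟩
  refine (card_le_card_of_injOn _ hproj hinj).trans_eq ?_
  rw [Fintype.card_piFinset, prod_const, card_univ, Fintype.card_subtype_compl,
    Fintype.card_subtype_eq, Fintype.card_fin]

theorem sum_comp_linear_form_add_le (hψ : ψ ≠ 0) (hK : ∀ x ∈ K, ∀ j, x j ∈ B) (c : R)
    {A : Finset R} (hA : ∀ x ∈ K, ∑ j, ψ j * x j + c ∈ A) {g : R → ℝ} (hg : ∀ y, 0 ≤ g y) :
    ∑ x ∈ K, g (∑ j, ψ j * x j + c) ≤ B.card ^ (D - 1) * ∑ y ∈ A, g y := by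
  rw [← sum_fiberwise_of_maps_to' hA, mul_sum]
  refine sum_le_sum fun y _ => ?_
  rw [sum_const, nsmul_eq_mul]
  gcongr
  · exact hg y
  · exact_mod_cast card_filter_linear_form_add_eq_le hψ hK c y

theorem norm_sum_prod_comp_linear_form_add_le {ι : Type*} [Fintype ι] {Ψ : ι → Fin D → R}
    {f : ι → R → ℂ} (hf : ∀ i y, ‖f i y‖ ≤ 1) (hK : ∀ x ∈ K, ∀ j, x j ∈ B) (c : R)
    {A : Finset R} (hA : ∀ x ∈ K, ∀ i, ∑ j, Ψ i j * x j + c ∈ A) {i₀ : ι} (hΨ : Ψ i₀ ≠ 0) :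
    ‖∑ x ∈ K, ∏ i, f i (∑ j, Ψ i j * x j + c)‖ ≤ B.card ^ (D - 1) * ∑ y ∈ A, ‖f i₀ y‖ :=
  (norm_sum_le _ _).trans <| (sum_le_sum fun _ _ => norm_prod_le_norm_of_norm_le_one
    (fun i => hf i _) i₀).trans <|
      sum_comp_linear_form_add_le hΨ hK c (fun x hx => hA x hx i₀) fun _ => norm_nonneg _

end LinearForm

/-- Lemma 2.2 (`l:smallN`): `|𝔼_{x ∈ K} ∏ᵢ fᵢ(ψᵢ(x)+c)| ≤ C N^{1/4} minᵢ ‖fᵢ‖_{U^{s+1}[N]}`. -/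
theorem small_N_bound (D t s : ℕ) (hs : 1 ≤ s)
    (ψ : Fin t → Fin D → ℤ) (hnz : ∀ i, ψ i ≠ 0)
    (κ₀ : ℝ) (hκ₀ : 0 < κ₀) :
    ∃ C : ℝ, ∀ N : ℕ, 1 ≤ N →
      ∀ f : Fin t → ℤ → ℂ,
        (∀ i x, ‖f i x‖ ≤ 1) →
        (∀ i x, x ∉ Finset.Icc (1 : ℤ) (N : ℤ) → f i x = 0) →
        ∀ K : Finset (Fin D → ℤ),
          (∀ x ∈ K, ∀ j, x j ∈ Finset.Icc (-(N : ℤ)) (N : ℤ)) →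
          κ₀ * (N : ℝ) ^ D ≤ (K.card : ℝ) →
          ∀ c : ℤ,
            (∀ x ∈ K, ∀ i, (∑ j, ψ i j * x j) + c ∈ Finset.Icc (1 : ℤ) (N : ℤ)) →
            ∀ j : Fin t,
              ‖(∑ x ∈ K, ∏ i, f i ((∑ j', ψ i j' * x j') + c)) / (K.card : ℂ)‖ ≤
                C * (N : ℝ) ^ ((1 : ℝ) / 4) *
                  gowersNorm (Finset.Icc (1 : ℤ) (N : ℤ)) (s + 1) (f j) := by
  refine ⟨2 * 3 ^ (D - 1) / κ₀, fun N hN f hf1 hf0 K hK hKcard c hrange j => ?_⟩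
  obtain ⟨s, rfl⟩ : ∃ s', s = s' + 1 := ⟨s - 1, by omega⟩
  have hD : D ≠ 0 := by
    rintro rfl
    exact hnz j (Subsingleton.elim _ _)
  have hN' : (1 : ℝ) ≤ N := by exact_mod_cast hN
  have hbox : ((Icc (-(N : ℤ)) N).card : ℝ) ≤ 3 * N := by
    have hcard : (Icc (-(N : ℤ)) N).card = 2 * N + 1 := by rw [Int.card_Icc]; omega
    rw [hcard]; push_cast; linarith
  have hK0 : (0 : ℝ) < K.card := lt_of_lt_of_le (by positivity) hKcard
  rw [norm_div, Complex.norm_natCast, div_le_iff₀ hK0]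
  calc _ ≤ (Icc (-(N : ℤ)) N).card ^ (D - 1) * ∑ y ∈ Icc (1 : ℤ) N, ‖f j y‖ :=
        norm_sum_prod_comp_linear_form_add_le hf1 hK c hrange (hnz j)
    _ ≤ (3 * N) ^ (D - 1) * (2 * (N : ℝ) ^ ((1 : ℝ) / 4) *
        gowersNorm (Icc 1 N) (s + 2) (f j) * N) := by
      gcongr
      exact sum_norm_le_gowersNorm_Icc hN (hf0 j) s
    _ = 2 * 3 ^ (D - 1) / κ₀ * (N : ℝ) ^ ((1 : ℝ) / 4) * gowersNorm (Icc 1 N) (s + 2) (f j) *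
        (κ₀ * N ^ D) := by
      obtain ⟨D, rfl⟩ := Nat.exists_eq_add_one_of_ne_zero hD
      rw [Nat.add_sub_cancel]
      field_simp
      ring
    _ ≤ _ := by
      have hG0 := gowersNorm_succ_nonneg (d := s + 1) (hf0 j)
      gcongr
end

section
/- Fix D ≥ 1 and L ≥ 1. There is a constant C depending only on D and L such that the following holds. Let ψ : ℤ^D → ℤ be a nonzero linear form with coefficients of magnitude at most L, let c ∈ ℤ, let q ≥ 1, let ε' > 0 with ε'N a positive integer, and let 𝒫 be a collection of pairwise disjoint sets P = P_1 × ⋯ × P_D ⊆ ({-N,…,N})^D, where each P_j is an arithmetic progression of common difference q containing ε'N integers. Suppose moreover that the sets of 𝒫 are grouped into axis-aligned lattice cubes of side length qε'N with pairwise disjoint interiors, each such cube being exactly partitioned by q^D members of 𝒫. Then for every n ∈ ℤ, the number of P ∈ 𝒫 with n ∈ ψ(P) + c is at most C · ε'^{-(D-1)}. -/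
open Finset

/-- `Q` is an axis-aligned lattice cube in `ℤ^D` of side length `m`. -/
def IsLatticeCube (D m : ℕ) (Q : Finset (Fin D → ℤ)) : Prop :=
  ∃ a : Fin D → ℤ, Q = Fintype.piFinset fun j => Finset.Ico (a j) (a j + (m : ℤ))

/-- `P` is a product `P₁ × ⋯ × P_D` where each `Pⱼ` is an arithmetic progression
of common difference `q` containing `m` integers. -/
def IsProgBox (D q m : ℕ) (P : Finset (Fin D → ℤ)) : Prop :=
  ∃ a : Fin D → ℤ,
    P = Fintype.piFinset fun j => (Finset.range m).image fun k : ℕ => a j + (q : ℤ) * (k : ℤ)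

/-!
Write `v = n - c`. A cube of side `q * m` meeting the hyperplane `ψ = v` lies in the slab
`|ψ - v| ≤ D * L * q * m` of `[-N, N]^D`, which has `O(q * m * N^(D-1))` points; as the cubes are
disjoint, at most `O((N / (q * m))^(D-1))` of them meet the hyperplane. Inside one cube a
progression box is the set of points with a fixed residue vector `r` mod `q`, and it can meet the
hyperplane only if `ψ ⬝ᵥ r ≡ v [ZMOD q]`, which happens for `O(q^(D-1))` of the `q^D` residue
vectors. Multiplying, `O((N / m)^(D-1)) = O(ε'^(-(D-1)))` boxes meet the hyperplane.
-/

open Fintype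

theorem image_range_eq_filter_Ico_modEq {q m : ℕ} {a b : ℤ} (hm : 0 < m)
    (h : (range m).image (fun k : ℕ => b + q * k) ⊆ Ico a (a + (q * m : ℕ))) :
    (range m).image (fun k : ℕ => b + q * k) =
      {y ∈ Ico a (a + (q * m : ℕ)) | y ≡ b [ZMOD q]} := by
  have hb : a ≤ b ∧ b + q * (m - 1 : ℕ) < a + (q * m : ℕ) := by
    have h₀ := mem_Ico.mp <| h <| mem_image_of_mem _ (mem_range.mpr hm)
    have h₁ := mem_Ico.mp <| h <| mem_image_of_mem _ (mem_range.mpr (Nat.sub_one_lt hm.ne'))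
    simp only [Nat.cast_zero, mul_zero, add_zero] at h₀
    exact ⟨h₀.1, h₁.2⟩
  push_cast [Nat.cast_sub hm] at hb ⊢
  ext y
  simp only [mem_image, mem_range, mem_filter, mem_Ico]
  constructor
  · rintro ⟨k, hk, rfl⟩
    refine ⟨mem_Ico.mp (h (mem_image_of_mem _ (mem_range.mpr hk))), ?_⟩
    simp [Int.ModEq]
  · rintro ⟨⟨hay, hya⟩, hyb⟩
    obtain ⟨k, hk⟩ := hyb.symm.dvd
    have hk₀ : 0 ≤ k := by nlinarith
    have hkm : k < m := by nlinarith
    exact ⟨k.toNat, by omega, by rw [Int.toNat_of_nonneg hk₀]; omega⟩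

theorem progBox_eq_filter_modEq_of_subset_cube {D q m : ℕ} (hm : 0 < m) {a b : Fin D → ℤ}
    (h : (piFinset fun j => (range m).image fun k : ℕ => b j + q * k) ⊆
      piFinset fun j => Ico (a j) (a j + (q * m : ℕ))) :
    (piFinset fun j => (range m).image fun k : ℕ => b j + q * k) =
      {x ∈ piFinset fun j => Ico (a j) (a j + (q * m : ℕ)) | ∀ j, x j ≡ b j [ZMOD q]} := by
  have hne : ∀ j, ((range m).image fun k : ℕ => b j + q * k).Nonempty := fun j =>
    (nonempty_range_iff.mpr hm.ne').image _
  have hcoord (j : Fin D) :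
      (range m).image (fun k : ℕ => b j + q * k) ⊆ Ico (a j) (a j + (q * m : ℕ)) :=
    calc _ = (piFinset fun j => (range m).image fun k : ℕ => b j + q * k).image (· j) :=
          (eval_image_piFinset _ j fun i _ => hne i).symm
      _ ⊆ _ := image_subset_image h
      _ ⊆ _ := eval_image_piFinset_subset _ j
  ext x
  simp only [mem_piFinset, mem_filter, image_range_eq_filter_Ico_modEq hm (hcoord _), forall_and]

theorem card_filter_dotProduct_mem_le {ι R : Type*} [Fintype ι] [DecidableEq ι] [CommRing R]
    [IsDomain R] [DecidableEq R] {ψ : ι → R} {j₀ : ι} (hj₀ : ψ j₀ ≠ 0) (S : ι → Finset R)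
    (T : Finset R) :
    #{x ∈ piFinset S | ψ ⬝ᵥ x ∈ T} ≤ #T * ∏ j ∈ univ.erase j₀, #(S j) := by
  calc #{x ∈ piFinset S | ψ ⬝ᵥ x ∈ T}
      ≤ #(piFinset (Function.update S j₀ T)) := by
        refine card_le_card_of_injOn (fun x => Function.update x j₀ (ψ ⬝ᵥ x)) ?_ ?_
        · intro x hx
          rw [mem_coe, mem_filter, mem_piFinset] at hx
          rw [mem_coe, mem_piFinset]
          intro j
          rcases eq_or_ne j j₀ with rfl | hj
          · simpa using hx.2
          · simpa [hj] using hx.1 j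
        · intro x _ y _ hxy
          have hoff : ∀ j ≠ j₀, x j = y j := fun j hj => by
            simpa [hj] using congrFun hxy j
          have hdiff : x - y = Pi.single j₀ (x j₀ - y j₀) := by
            ext j
            rcases eq_or_ne j j₀ with rfl | hj
            · simp
            · simp [hj, hoff j hj]
          have hdot : ψ j₀ * (x j₀ - y j₀) = 0 := by
            rw [← dotProduct_single, ← hdiff, dotProduct_sub, sub_eq_zero]
            simpa using congrFun hxy j₀
          rw [← sub_eq_zero, hdiff, (mul_eq_zero.mp hdot).resolve_left hj₀, Pi.single_zero]
    _ = #T * ∏ j ∈ univ.erase j₀, #(S j) := by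
        rw [card_piFinset, ← mul_prod_erase univ _ (mem_univ j₀), Function.update_self]
        congr 1
        exact prod_congr rfl fun j hj => by rw [Function.update_of_ne (ne_of_mem_erase hj)]

theorem abs_dotProduct_le {ι R : Type*} [Fintype ι] [Ring R] [LinearOrder R] [IsOrderedRing R]
    {ψ x : ι → R} {L M : R} (hψ : ∀ j, |ψ j| ≤ L) (hx : ∀ j, |x j| ≤ M) :
    |ψ ⬝ᵥ x| ≤ Fintype.card ι * L * M := by
  calc |ψ ⬝ᵥ x| ≤ ∑ j, |ψ j * x j| := abs_sum_le_sum_abs _ _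
    _ ≤ ∑ _j : ι, L * M := sum_le_sum fun j _ => by
        rw [abs_mul]
        exact mul_le_mul (hψ j) (hx j) (abs_nonneg _) ((abs_nonneg _).trans (hψ j))
    _ = Fintype.card ι * L * M := by rw [sum_const, card_univ, nsmul_eq_mul, mul_assoc]

theorem card_filter_dotProduct_modEq_le {D L q : ℕ} {ψ : Fin D → ℤ} (hψ : ψ ≠ 0)
    (hψL : ∀ j, |ψ j| ≤ L) (hq : 0 < q) (v : ℤ) :
    #{r ∈ piFinset fun _ : Fin D => Ico 0 (q : ℤ) | ψ ⬝ᵥ r ≡ v [ZMOD q]} ≤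
      (2 * D * L + 1) * q ^ (D - 1) := by
  obtain ⟨j₀, hj₀⟩ := Function.ne_iff.mp hψ
  have hq' : (0 : ℤ) < q := by exact_mod_cast hq
  set T := (Icc (-(D * L : ℤ)) (D * L)).image fun k => q * k + v % q
  have hsub : {r ∈ piFinset fun _ : Fin D => Ico 0 (q : ℤ) | ψ ⬝ᵥ r ≡ v [ZMOD q]} ⊆
      {r ∈ piFinset fun _ : Fin D => Ico 0 (q : ℤ) | ψ ⬝ᵥ r ∈ T} := by
    intro r hr
    rw [mem_filter, mem_piFinset] at hr ⊢
    refine ⟨hr.1, mem_image.mpr ⟨ψ ⬝ᵥ r / q, ?_, ?_⟩⟩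
    · have hbound : |ψ ⬝ᵥ r| ≤ D * L * q := by
        simpa using abs_dotProduct_le hψL fun j => abs_le.mpr <| by
          have := mem_Ico.mp (hr.1 j); constructor <;> linarith
      have := Int.emod_add_mul_ediv (ψ ⬝ᵥ r) q
      have := Int.emod_nonneg (ψ ⬝ᵥ r) hq'.ne'
      have := Int.emod_lt_of_pos (ψ ⬝ᵥ r) hq'
      rw [mem_Icc]
      constructor <;> nlinarith [abs_le.mp hbound]
    · rw [← hr.2]
      exact Int.mul_ediv_add_emod _ _
  calc _ ≤ _ := card_le_card hsub
    _ ≤ #T * ∏ j ∈ univ.erase j₀, #(Ico 0 (q : ℤ)) := card_filter_dotProduct_mem_le hj₀ _ T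
    _ ≤ (2 * D * L + 1) * q ^ (D - 1) := by
        gcongr
        · refine card_image_le.trans (le_of_eq ?_)
          rw [Int.card_Icc, ← Int.toNat_natCast (2 * D * L + 1)]
          push_cast
          ring_nf
        · simp

theorem card_progBoxes_in_cube_meeting_level_le {D L q m : ℕ} {ψ : Fin D → ℤ} (hψ : ψ ≠ 0)
    (hψL : ∀ j, |ψ j| ≤ L) (hq : 0 < q) (hm : 0 < m) (v : ℤ)
    {Ps : Finset (Finset (Fin D → ℤ))} (hPs : ∀ P ∈ Ps, IsProgBox D q m P)
    {Q : Finset (Fin D → ℤ)} (hQ : IsLatticeCube D (q * m) Q) :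
    #{P ∈ Ps | P ⊆ Q ∧ ∃ x ∈ P, ψ ⬝ᵥ x = v} ≤ (2 * D * L + 1) * q ^ (D - 1) := by
  obtain ⟨a, rfl⟩ := hQ
  set residues := {r ∈ piFinset fun _ : Fin D => Ico 0 (q : ℤ) | ψ ⬝ᵥ r ≡ v [ZMOD q]}
  set cube := piFinset fun j => Ico (a j) (a j + (q * m : ℕ))
  have hsub : {P ∈ Ps | P ⊆ cube ∧ ∃ x ∈ P, ψ ⬝ᵥ x = v} ⊆
      residues.image fun r => {x ∈ cube | ∀ j, x j % q = r j} := by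
    intro P hP
    obtain ⟨hPPs, hPQ, x, hxP, hxv⟩ := mem_filter.mp hP
    obtain ⟨b, rfl⟩ := hPs P hPPs
    have hP := progBox_eq_filter_modEq_of_subset_cube hm hPQ
    have hxb : ∀ j, x j ≡ b j [ZMOD q] := (mem_filter.mp (hP ▸ hxP)).2
    refine mem_image.mpr ⟨fun j => b j % q, mem_filter.mpr ⟨?_, ?_⟩, hP.symm⟩
    · have hq' : (0 : ℤ) < q := by exact_mod_cast hq
      exact mem_piFinset.mpr fun j =>
        mem_Ico.mpr ⟨Int.emod_nonneg _ hq'.ne', Int.emod_lt_of_pos _ hq'⟩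
    · rw [← hxv]
      exact Int.ModEq.sum fun j _ => ((Int.mod_modEq (b j) q).trans (hxb j).symm).mul_left _
  calc _ ≤ _ := card_le_card hsub
    _ ≤ #residues := card_image_le
    _ ≤ _ := card_filter_dotProduct_modEq_le hψ hψL hq v

theorem IsLatticeCube.card_eq {D s : ℕ} {Q : Finset (Fin D → ℤ)} (hQ : IsLatticeCube D s Q) :
    #Q = s ^ D := by
  obtain ⟨a, rfl⟩ := hQ
  simp [card_piFinset, Int.card_Ico]

theorem IsLatticeCube.abs_sub_le {D s : ℕ} {Q : Finset (Fin D → ℤ)} (hQ : IsLatticeCube D s Q)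
    {x y : Fin D → ℤ} (hx : x ∈ Q) (hy : y ∈ Q) (j : Fin D) : |x j - y j| ≤ s := by
  obtain ⟨a, rfl⟩ := hQ
  have hxj := mem_Ico.mp (mem_piFinset.mp hx j)
  have hyj := mem_Ico.mp (mem_piFinset.mp hy j)
  exact abs_le.mpr ⟨by linarith, by linarith⟩

theorem card_cubes_meeting_level_mul_le {D L N s : ℕ} {ψ : Fin D → ℤ} (hψ : ψ ≠ 0)
    (hψL : ∀ j, |ψ j| ≤ L) (v : ℤ) {𝒞 : Finset (Finset (Fin D → ℤ))}
    (h𝒞 : ∀ Q ∈ 𝒞, IsLatticeCube D s Q)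
    (h𝒞disj : (𝒞 : Set (Finset (Fin D → ℤ))).PairwiseDisjoint id)
    (h𝒞N : ∀ Q ∈ 𝒞, ∀ x ∈ Q, ∀ j, x j ∈ Icc (-(N : ℤ)) N) :
    #{Q ∈ 𝒞 | ∃ x ∈ Q, ψ ⬝ᵥ x = v} * s ^ D ≤ (2 * D * L * s + 1) * (2 * N + 1) ^ (D - 1) := by
  obtain ⟨j₀, hj₀⟩ := Function.ne_iff.mp hψ
  set hit := {Q ∈ 𝒞 | ∃ x ∈ Q, ψ ⬝ᵥ x = v}
  have hunion : #(hit.biUnion id) = #hit * s ^ D := by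
    rw [card_biUnion (h𝒞disj.subset (coe_subset.mpr (filter_subset _ _))), sum_const_nat]
    exact fun Q hQ => (h𝒞 Q (mem_filter.mp hQ).1).card_eq
  have hslab : hit.biUnion id ⊆ {x ∈ piFinset fun _ : Fin D => Icc (-(N : ℤ)) N |
      ψ ⬝ᵥ x ∈ Icc (v - (D * L * s : ℕ)) (v + (D * L * s : ℕ))} := by
    intro x hx
    obtain ⟨Q, hQ, hxQ⟩ := mem_biUnion.mp hx
    obtain ⟨hQ𝒞, y, hyQ, rfl⟩ := mem_filter.mp hQ
    have hdiff : |ψ ⬝ᵥ x - ψ ⬝ᵥ y| ≤ (D * L * s : ℕ) := by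
      rw [← dotProduct_sub]
      push_cast
      simpa only [Fintype.card_fin] using
        abs_dotProduct_le (x := x - y) hψL ((h𝒞 Q hQ𝒞).abs_sub_le hxQ hyQ)
    refine mem_filter.mpr ⟨mem_piFinset.mpr (h𝒞N Q hQ𝒞 x hxQ), mem_Icc.mpr ?_⟩
    constructor <;> linarith [abs_le.mp hdiff]
  calc #hit * s ^ D = #(hit.biUnion id) := hunion.symm
    _ ≤ _ := card_le_card hslab
    _ ≤ _ := card_filter_dotProduct_mem_le hj₀ _ _
    _ = (2 * D * L * s + 1) * (2 * N + 1) ^ (D - 1) := by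
        congr 1
        · rw [Int.card_Icc, ← Int.toNat_natCast (2 * D * L * s + 1)]
          push_cast
          ring_nf
        · simp only [Int.card_Icc, prod_const, card_erase_of_mem (mem_univ j₀), card_univ,
            Fintype.card_fin]
          congr 1
          omega

theorem card_progBoxes_meeting_level_le {D L q m : ℕ} {ψ : Fin D → ℤ} (hψ : ψ ≠ 0)
    (hψL : ∀ j, |ψ j| ≤ L) (hq : 0 < q) (hm : 0 < m) (v : ℤ)
    {Ps 𝒞 : Finset (Finset (Fin D → ℤ))} (hPs : ∀ P ∈ Ps, IsProgBox D q m P)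
    (h𝒞 : ∀ Q ∈ 𝒞, IsLatticeCube D (q * m) Q) (hPs𝒞 : ∀ P ∈ Ps, ∃ Q ∈ 𝒞, P ⊆ Q) :
    #{P ∈ Ps | ∃ x ∈ P, ψ ⬝ᵥ x = v} ≤
      #{Q ∈ 𝒞 | ∃ x ∈ Q, ψ ⬝ᵥ x = v} * ((2 * D * L + 1) * q ^ (D - 1)) := by
  set hitCubes := {Q ∈ 𝒞 | ∃ x ∈ Q, ψ ⬝ᵥ x = v}
  have hcover : {P ∈ Ps | ∃ x ∈ P, ψ ⬝ᵥ x = v} ⊆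
      hitCubes.biUnion fun Q => {P ∈ Ps | P ⊆ Q ∧ ∃ x ∈ P, ψ ⬝ᵥ x = v} := by
    intro P hP
    obtain ⟨hPPs, x, hxP, hxv⟩ := mem_filter.mp hP
    obtain ⟨Q, hQ, hPQ⟩ := hPs𝒞 P hPPs
    exact mem_biUnion.mpr
      ⟨Q, mem_filter.mpr ⟨hQ, x, hPQ hxP, hxv⟩, mem_filter.mpr ⟨hPPs, hPQ, x, hxP, hxv⟩⟩
  calc _ ≤ _ := card_le_card hcover
    _ ≤ _ := card_biUnion_le
    _ ≤ _ := sum_le_card_nsmul _ _ _ fun Q hQ =>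
        card_progBoxes_in_cube_meeting_level_le hψ hψL hq hm v hPs (h𝒞 Q (mem_filter.mp hQ).1)

theorem card_progBoxes_meeting_level_mul_pow_le {D L N q m : ℕ} {ψ : Fin D → ℤ} (hψ : ψ ≠ 0)
    (hψL : ∀ j, |ψ j| ≤ L) (hN : 1 ≤ N) (hq : 0 < q) (hm : 0 < m) (v : ℤ)
    {Ps 𝒞 : Finset (Finset (Fin D → ℤ))} (hPs : ∀ P ∈ Ps, IsProgBox D q m P)
    (h𝒞 : ∀ Q ∈ 𝒞, IsLatticeCube D (q * m) Q)
    (h𝒞disj : (𝒞 : Set (Finset (Fin D → ℤ))).PairwiseDisjoint id)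
    (hPs𝒞 : ∀ P ∈ Ps, ∃ Q ∈ 𝒞, P ⊆ Q)
    (h𝒞N : ∀ Q ∈ 𝒞, ∀ x ∈ Q, ∀ j, x j ∈ Icc (-(N : ℤ)) N) :
    #{P ∈ Ps | ∃ x ∈ P, ψ ⬝ᵥ x = v} * m ^ (D - 1) ≤
      (2 * D * L + 1) ^ 2 * (3 * N) ^ (D - 1) := by
  obtain ⟨j₀, -⟩ := Function.ne_iff.mp hψ
  have hD : D ≠ 0 := j₀.pos.ne'
  set K := 2 * D * L + 1
  set X := #{P ∈ Ps | ∃ x ∈ P, ψ ⬝ᵥ x = v}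
  set H := #{Q ∈ 𝒞 | ∃ x ∈ Q, ψ ⬝ᵥ x = v}
  have hboxes : X ≤ H * (K * q ^ (D - 1)) :=
    card_progBoxes_meeting_level_le hψ hψL hq hm v hPs h𝒞 hPs𝒞
  have hcubes : H * (q * m) ^ D ≤ K * (q * m) * (3 * N) ^ (D - 1) := by
    refine (card_cubes_meeting_level_mul_le hψ hψL v h𝒞 h𝒞disj h𝒞N).trans ?_
    have hqm : 1 ≤ q * m := Nat.one_le_iff_ne_zero.mpr (by positivity)
    gcongr
    · simp only [K]; nlinarith
    · omega
  refine Nat.le_of_mul_le_mul_right (c := q ^ D * m) ?_ (by positivity)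
  calc X * m ^ (D - 1) * (q ^ D * m) = X * (q * m) ^ D := by
        rw [mul_pow, ← pow_sub_one_mul hD m]; ring
    _ ≤ H * (K * q ^ (D - 1)) * (q * m) ^ D := by gcongr
    _ = K * q ^ (D - 1) * (H * (q * m) ^ D) := by ring
    _ ≤ K * q ^ (D - 1) * (K * (q * m) * (3 * N) ^ (D - 1)) := by gcongr
    _ = K ^ 2 * (3 * N) ^ (D - 1) * (q ^ D * m) := by rw [← pow_sub_one_mul hD q]; ring

theorem few_boxes_hit_general (D L : ℕ) :
    ∃ C : ℝ, ∀ (N q m : ℕ) (ε' : ℝ), 1 ≤ N → 1 ≤ q → 0 < m → 0 < ε' → (m : ℝ) = ε' * N →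
      ∀ (ψ : Fin D → ℤ), ψ ≠ 0 → (∀ j, |ψ j| ≤ (L : ℤ)) →
      ∀ c : ℤ,
      ∀ Ps : Finset (Finset (Fin D → ℤ)),
        (∀ P ∈ Ps, IsProgBox D q m P) →
        (∀ P ∈ Ps, ∀ x ∈ P, ∀ j, x j ∈ Finset.Icc (-(N : ℤ)) (N : ℤ)) →
        (Ps : Set (Finset (Fin D → ℤ))).PairwiseDisjoint id →
        -- the boxes of `Ps` are grouped into pairwise disjoint lattice cubes of side `q·m`,
        -- each cube exactly partitioned by `q^D` members of `Ps`
        (∃ 𝒞 : Finset (Finset (Fin D → ℤ)),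
          (∀ Q ∈ 𝒞, IsLatticeCube D (q * m) Q) ∧
          (𝒞 : Set (Finset (Fin D → ℤ))).PairwiseDisjoint id ∧
          (∀ P ∈ Ps, ∃ Q ∈ 𝒞, P ⊆ Q) ∧
          (∀ Q ∈ 𝒞, (Ps.filter fun P => P ⊆ Q).card = q ^ D ∧
            ∀ x ∈ Q, ∃ P ∈ Ps, P ⊆ Q ∧ x ∈ P)) →
        ∀ n : ℤ,
          ((Ps.filter fun P => ∃ x ∈ P, (∑ j, ψ j * x j) + c = n).card : ℝ) ≤
            C / ε' ^ (D - 1) := by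
  refine ⟨(2 * D * L + 1) ^ 2 * 3 ^ (D - 1), ?_⟩
  rintro N q m ε' hN hq hm - hεN ψ hψ hψL c Ps hPs hPsN - ⟨𝒞, h𝒞, h𝒞disj, hPs𝒞, h𝒞Ps⟩ n
  have h𝒞N : ∀ Q ∈ 𝒞, ∀ x ∈ Q, ∀ j, x j ∈ Icc (-(N : ℤ)) N := fun Q hQ x hx => by
    obtain ⟨P, hP, -, hxP⟩ := (h𝒞Ps Q hQ).2 x hx
    exact hPsN P hP x hxP
  have hcount := card_progBoxes_meeting_level_mul_pow_le hψ hψL hN hq hm (n - c) hPs h𝒞 h𝒞disj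
    hPs𝒞 h𝒞N
  simp_rw [eq_sub_iff_add_eq] at hcount
  show (#{P ∈ Ps | ∃ x ∈ P, ψ ⬝ᵥ x + c = n} : ℝ) ≤ _
  have hN' : (0 : ℝ) < N := by exact_mod_cast hN
  rw [show ε' = m / N by field_simp; linarith, div_pow, div_div_eq_mul_div,
    le_div_iff₀ (by positivity)]
  calc _ ≤ (((2 * D * L + 1) ^ 2 * (3 * N) ^ (D - 1) : ℕ) : ℝ) := by exact_mod_cast hcount
    _ = _ := by push_cast; ring

/-- Lemma 2.5 (`l:gtfix`): for each `n ∈ ℤ`, at most `O(ε'^{-(D-1)})` of the progression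
boxes `P ∈ Ps` satisfy `n ∈ ψ(P) + c`. -/
theorem few_boxes_hit (D L : ℕ) (hD : 1 ≤ D) (hL : 1 ≤ L) :
    ∃ C : ℝ, ∀ (N q m : ℕ) (ε' : ℝ), 1 ≤ N → 1 ≤ q → 0 < m → 0 < ε' → (m : ℝ) = ε' * N →
      ∀ (ψ : Fin D → ℤ), ψ ≠ 0 → (∀ j, |ψ j| ≤ (L : ℤ)) →
      ∀ c : ℤ,
      ∀ Ps : Finset (Finset (Fin D → ℤ)),
        (∀ P ∈ Ps, IsProgBox D q m P) →
        (∀ P ∈ Ps, ∀ x ∈ P, ∀ j, x j ∈ Finset.Icc (-(N : ℤ)) (N : ℤ)) →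
        (Ps : Set (Finset (Fin D → ℤ))).PairwiseDisjoint id →
        -- the boxes of `Ps` are grouped into pairwise disjoint lattice cubes of side `q·m`,
        -- each cube exactly partitioned by `q^D` members of `Ps`
        (∃ 𝒞 : Finset (Finset (Fin D → ℤ)),
          (∀ Q ∈ 𝒞, IsLatticeCube D (q * m) Q) ∧
          (𝒞 : Set (Finset (Fin D → ℤ))).PairwiseDisjoint id ∧
          (∀ P ∈ Ps, ∃ Q ∈ 𝒞, P ⊆ Q) ∧
          (∀ Q ∈ 𝒞, (Ps.filter fun P => P ⊆ Q).card = q ^ D ∧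
            ∀ x ∈ Q, ∃ P ∈ Ps, P ⊆ Q ∧ x ∈ P)) →
        ∀ n : ℤ,
          ((Ps.filter fun P => ∃ x ∈ P, (∑ j, ψ j * x j) + c = n).card : ℝ) ≤
            C / ε' ^ (D - 1) :=
  few_boxes_hit_general D L
end

section
/- Let Ψ = (ψ_1, …, ψ_t) be a system of linear forms ℤ^D → ℤ that is translation invariant, i.e. (1,…,1) ∈ Ψ^{[1]}. Then Ψ satisfies the flag condition: for all integers 1 ≤ k < l, Ψ^{[k]} ⊆ Ψ^{[l]}. -/
open Finset

/-- `Ψ^{[k]} = span_ℝ {(ψ₁(x)^k, …, ψ_t(x)^k) : x ∈ ℤ^D} ⊆ ℝ^t`. -/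
def psiSpan (D t : ℕ) (ψ : Fin t → Fin D → ℤ) (k : ℕ) : Submodule ℝ (Fin t → ℝ) :=
  Submodule.span ℝ {v : Fin t → ℝ | ∃ x : Fin D → ℤ,
    v = fun i => (∑ j, (ψ i j : ℝ) * (x j : ℝ)) ^ k}

/-!
For vectors multiplied pointwise, `Ψ^{[k]} · Ψ^{[1]} ⊆ Ψ^{[k+1]}`: the vector `ψ(x)^k ψ(y)` is
`1/(k+1)` times the coefficient of `s` in `ψ(x + s y)^{k+1}`, a polynomial in `s` whose values at
all `s ∈ ℕ` lie in `Ψ^{[k+1]}`, so all of its coefficients do. If the all-ones vector lies in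
`Ψ^{[1]}`, then `Ψ^{[k]} = Ψ^{[k]} · 1 ⊆ Ψ^{[k+1]}`.
-/

open Polynomial in
theorem Submodule.mem_of_forall_sum_pow_smul_mem {K V : Type*} [Field K] [CharZero K]
    [AddCommGroup V] [Module K V] (W : Submodule K V) {n : ℕ} {v : ℕ → V}
    (h : ∀ s : ℕ, ∑ j ∈ range n, s ^ j • v j ∈ W) {j : ℕ} (hj : j < n) : v j ∈ W := by
  by_contra hv
  obtain ⟨f, hfv, hWf⟩ := W.exists_le_ker_of_notMem hv
  set P : K[X] := ∑ i ∈ range n, C (f (v i)) * X ^ i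
  have hroot (s : ℕ) : P.IsRoot s := by
    have := hWf (h s)
    rw [LinearMap.mem_ker, map_sum] at this
    simp only [P, IsRoot, eval_finsetSum, eval_mul, eval_C, eval_pow, eval_X]
    simpa [mul_comm] using this
  have hP : P = 0 := P.eq_zero_of_infinite_isRoot <|
    (Set.infinite_range_of_injective Nat.cast_injective).mono <| by
      rintro _ ⟨s, rfl⟩
      exact hroot s
  have hcoeff : P.coeff j = 0 := by rw [hP, coeff_zero]
  simp only [P, finsetSum_coeff, coeff_C_mul_X_pow, sum_ite_eq, mem_range, if_pos hj] at hcoeff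
  exact hfv hcoeff

section PowSpan

variable (K : Type*) {G A : Type*} [Field K] [AddCommMonoid G] [CommRing A] [Algebra K A]

def powSpan (φ : G →+ A) (k : ℕ) : Submodule K A :=
  Submodule.span K (Set.range fun x => φ x ^ k)

variable {K} [CharZero K] (φ : G →+ A)

theorem pow_mul_mem_powSpan_succ (x y : G) (k : ℕ) : φ x ^ k * φ y ∈ powSpan K φ (k + 1) := by
  set n := k + 1
  have hexpand (s : ℕ) : φ (x + s • y) ^ n =
      ∑ j ∈ range (n + 1), s ^ j • (n.choose j • (φ y ^ j * φ x ^ (n - j))) := by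
    rw [map_add, map_nsmul, add_comm, add_pow]
    refine sum_congr rfl fun j _ => ?_
    rw [smul_pow, smul_mul_assoc, smul_mul_assoc]
    congr 1
    rw [nsmul_eq_mul, mul_comm]
  have hcoeff := (powSpan K φ n).mem_of_forall_sum_pow_smul_mem
    (fun s => by rw [← hexpand]; exact Submodule.subset_span ⟨_, rfl⟩) (show 1 < n + 1 by omega)
  simp only [Nat.choose_one_right, pow_one, n, Nat.add_sub_cancel] at hcoeff
  rwa [← Nat.cast_smul_eq_nsmul K, Submodule.smul_mem_iff _ (Nat.cast_ne_zero.2 k.succ_ne_zero),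
    mul_comm] at hcoeff

theorem powSpan_mul_powSpan_one_le (k : ℕ) :
    powSpan K φ k * powSpan K φ 1 ≤ powSpan K φ (k + 1) := by
  rw [powSpan, powSpan, Submodule.span_mul_span, Submodule.span_le]
  rintro _ ⟨_, ⟨x, rfl⟩, _, ⟨y, rfl⟩, rfl⟩
  simpa using pow_mul_mem_powSpan_succ φ x y k

theorem powSpan_monotone (h1 : 1 ∈ powSpan K φ 1) : Monotone (powSpan K φ) :=
  monotone_nat_of_le_succ fun k _ hv => by
    simpa using powSpan_mul_powSpan_one_le φ k (Submodule.mul_mem_mul hv h1)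

end PowSpan

def linearFormsEval (D t : ℕ) (ψ : Fin t → Fin D → ℤ) : (Fin D → ℤ) →+ (Fin t → ℝ) where
  toFun x i := ∑ j, (ψ i j : ℝ) * x j
  map_zero' := by ext; simp
  map_add' x y := by ext; simp [mul_add, sum_add_distrib]

theorem psiSpan_eq_powSpan (D t : ℕ) (ψ : Fin t → Fin D → ℤ) (k : ℕ) :
    psiSpan D t ψ k = powSpan ℝ (linearFormsEval D t ψ) k := by
  rw [psiSpan, powSpan]
  congr 1
  ext v
  simp [eq_comm, linearFormsEval, Pi.pow_def]

/-- A translation invariant system of linear forms satisfies the flag condition: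
`Ψ^{[k]} ⊆ Ψ^{[l]}` for all `1 ≤ k < l`. -/
theorem translation_invariant_implies_flag (D t : ℕ) (ψ : Fin t → Fin D → ℤ)
    (hti : (fun _ : Fin t => (1 : ℝ)) ∈ psiSpan D t ψ 1) :
    ∀ k l : ℕ, 1 ≤ k → k < l → psiSpan D t ψ k ≤ psiSpan D t ψ l := by
  intro k l _ hkl
  simp only [psiSpan_eq_powSpan] at hti ⊢
  exact powSpan_monotone _ hti hkl.le
end
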